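/- Let K be a field and S = K[A_1,…,A_7,B_1,…,B_7]. Let S(Θ) be the K-span of the monomials A_1^{u_1}⋯A_7^{u_7}B_1^{v_1}⋯B_7^{v_7} satisfying u_1+u_2 = v_3+v_4, u_2+u_3 = v_2+v_3, u_3+u_4 = v_1+v_2, u_4+u_5 = v_6+v_7, u_5+u_6 = v_5+v_6, u_6+u_7 = v_4+v_5 (the matching Θ(x_1)=y_3, Θ(x_2)=y_2, Θ(x_3)=y_1, Θ(x_4)=y_6, Θ(x_5)=y_5, Θ(x_6)=y_4 for n = 7). Then the eleven monomials X_1 = A_2B_3, X_2 = A_3B_2, X_3 = A_5B_6, X_4 = A_6B_5, Y_1 = A_1A_7B_4, Y_2 = A_4B_1B_7, Z_1 = A_1A_3B_1B_3, Z_2 = A_5A_7B_5B_7, W_1 = A_1A_4A_6B_1B_4B_6, W_2 = A_2A_4A_6B_2B_4B_6, W_3 = A_2A_4A_7B_2B_4B_7 all lie in S(Θ), and they generate S(Θ) as a K-algebra. -/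

import Mathlib

open MvPolynomial

/-- The variable `A_i` (1-indexed `i`; here `i : Fin n` is the 0-indexed position). -/
noncomputable def Av (K : Type*) [Field K] (n : ℕ) (i : Fin n) :
    MvPolynomial (Fin n ⊕ Fin n) K := X (Sum.inl i)

/-- The variable `B_i` (1-indexed `i`; here `i : Fin n` is the 0-indexed position). -/
noncomputable def Bv (K : Type*) [Field K] (n : ℕ) (i : Fin n) :
    MvPolynomial (Fin n ⊕ Fin n) K := X (Sum.inr i)

/-- The monomial `A_1^{u 1} ⋯ A_n^{u n} · B_1^{v 1} ⋯ B_n^{v n}` (1-indexed exponents). -/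
noncomputable def monAB (K : Type*) [Field K] (n : ℕ) (u v : ℕ → ℕ) :
    MvPolynomial (Fin n ⊕ Fin n) K :=
  (∏ i : Fin n, X (Sum.inl i) ^ u ((i : ℕ) + 1)) *
    ∏ i : Fin n, X (Sum.inr i) ^ v ((i : ℕ) + 1)

/-- The `K`-span of the monomials whose (1-indexed) exponent vectors satisfy the
control equations `E`; this is the ring `S(Θ)` when `E` is the system of control
equations of a matching `Θ`. -/
noncomputable def controlSpan (K : Type*) [Field K] (n : ℕ)
    (E : (ℕ → ℕ) → (ℕ → ℕ) → Prop) :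
    Submodule K (MvPolynomial (Fin n ⊕ Fin n) K) :=
  Submodule.span K {p | ∃ u v : ℕ → ℕ, E u v ∧ p = monAB K n u v}

/-!
The monomials whose exponent vectors solve the control equations form a monoid spanning
`S(Θ)`, so it suffices to show that each of them is a product of the eleven generators. The
equations are cancellative: removing a dominated solution from a solution leaves a solution.
Hence, by induction on the degree, it suffices that every nonzero solution `(u, v)`
dominates the exponent vector of some generator. Since the generators are squarefree, this
only depends on the supports of `u` and `v`, and each control equation `u_i + u_j = v_k + v_l`
only constrains supports through `u_i > 0 ∨ u_j > 0 ↔ v_k > 0 ∨ v_l > 0`; the finitely many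
support patterns are checked exhaustively.
-/

section ControlSpan

variable {K : Type*} [Field K] {n : ℕ}

def expDeg (n : ℕ) (u v : ℕ → ℕ) : ℕ := ∑ i : Fin n, (u (i + 1) + v (i + 1))

lemma expDeg_add (u v u' v' : ℕ → ℕ) :
    expDeg n (u + u') (v + v') = expDeg n u v + expDeg n u' v' := by
  simp only [expDeg, Pi.add_apply, ← Finset.sum_add_distrib]
  exact Finset.sum_congr rfl fun _ _ => by ring

lemma monAB_add (u v u' v' : ℕ → ℕ) :
    monAB K n (u + u') (v + v') = monAB K n u v * monAB K n u' v' := by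
  simp only [monAB, Pi.add_apply, pow_add, Finset.prod_mul_distrib]
  ring

lemma monAB_eq_one_of_expDeg_eq_zero {u v : ℕ → ℕ} (h : expDeg n u v = 0) :
    monAB K n u v = 1 := by
  simp only [expDeg, Finset.sum_eq_zero_iff, Finset.mem_univ, true_implies,
    Nat.add_eq_zero_iff] at h
  simp [monAB, h]

variable (K n) in
def controlMonoid (E : (ℕ → ℕ) → (ℕ → ℕ) → Prop) (hE₀ : E 0 0)
    (hE_add : ∀ {u v u' v'}, E u v → E u' v' → E (u + u') (v + v')) :
    Submonoid (MvPolynomial (Fin n ⊕ Fin n) K) where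
  carrier := {p | ∃ u v, E u v ∧ p = monAB K n u v}
  one_mem' := ⟨0, 0, hE₀, (monAB_eq_one_of_expDeg_eq_zero (by simp [expDeg])).symm⟩
  mul_mem' := by
    rintro _ _ ⟨u, v, h, rfl⟩ ⟨u', v', h', rfl⟩
    exact ⟨u + u', v + v', hE_add h h', (monAB_add u v u' v').symm⟩

lemma monAB_mem_closure_of_dominates {E : (ℕ → ℕ) → (ℕ → ℕ) → Prop}
    {S : Set ((ℕ → ℕ) × (ℕ → ℕ))}
    (hE_sub : ∀ {u v a b}, E u v → E a b → a ≤ u → b ≤ v → E (u - a) (v - b))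
    (hS : ∀ g ∈ S, E g.1 g.2 ∧ expDeg n g.1 g.2 ≠ 0)
    (hdom : ∀ u v, E u v → expDeg n u v ≠ 0 → ∃ g ∈ S, g.1 ≤ u ∧ g.2 ≤ v)
    {u v : ℕ → ℕ} (h : E u v) :
    monAB K n u v ∈ Submonoid.closure ((fun g => monAB K n g.1 g.2) '' S) := by
  induction hd : expDeg n u v using Nat.strong_induction_on generalizing u v with
  | _ d ih =>
    obtain rfl | hd₀ := eq_or_ne d 0
    · rw [monAB_eq_one_of_expDeg_eq_zero hd]
      exact one_mem _
    obtain ⟨⟨a, b⟩, hg, hau, hbv⟩ := hdom u v h (hd ▸ hd₀)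
    obtain ⟨hEg, hdeg⟩ : E a b ∧ expDeg n a b ≠ 0 := hS _ hg
    have hsplit : expDeg n a b + expDeg n (u - a) (v - b) = d := by
      rw [← expDeg_add, add_tsub_cancel_of_le hau, add_tsub_cancel_of_le hbv, hd]
    have hfactor : monAB K n u v = monAB K n a b * monAB K n (u - a) (v - b) := by
      rw [← monAB_add, add_tsub_cancel_of_le hau, add_tsub_cancel_of_le hbv]
    rw [hfactor]
    exact mul_mem (Submonoid.subset_closure ⟨_, hg, rfl⟩)
      (ih _ (by omega) (hE_sub h hEg hau hbv) rfl)

lemma monAB_mem_controlSpan {E : (ℕ → ℕ) → (ℕ → ℕ) → Prop} {u v : ℕ → ℕ} (h : E u v) :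
    monAB K n u v ∈ controlSpan K n E :=
  Submodule.subset_span ⟨u, v, h, rfl⟩

lemma coe_adjoin_eq_controlSpan {E : (ℕ → ℕ) → (ℕ → ℕ) → Prop}
    {S : Set ((ℕ → ℕ) × (ℕ → ℕ))} (hE₀ : E 0 0)
    (hE_add : ∀ {u v u' v'}, E u v → E u' v' → E (u + u') (v + v'))
    (hE_sub : ∀ {u v a b}, E u v → E a b → a ≤ u → b ≤ v → E (u - a) (v - b))
    (hS : ∀ g ∈ S, E g.1 g.2 ∧ expDeg n g.1 g.2 ≠ 0)
    (hdom : ∀ u v, E u v → expDeg n u v ≠ 0 → ∃ g ∈ S, g.1 ≤ u ∧ g.2 ≤ v) :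
    (Algebra.adjoin K ((fun g => monAB K n g.1 g.2) '' S) :
      Set (MvPolynomial (Fin n ⊕ Fin n) K)) = controlSpan K n E := by
  have hclosure : (Submonoid.closure ((fun g => monAB K n g.1 g.2) '' S) : Set _) =
      (controlMonoid K n E hE₀ hE_add : Set (MvPolynomial (Fin n ⊕ Fin n) K)) := by
    refine le_antisymm (Submonoid.closure_le.2 ?_) ?_
    · rintro _ ⟨g, hg, rfl⟩
      exact ⟨g.1, g.2, (hS g hg).1, rfl⟩
    · rintro _ ⟨u, v, h, rfl⟩
      exact monAB_mem_closure_of_dominates hE_sub hS hdom h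
  rw [← Subalgebra.coe_toSubmodule, Algebra.adjoin_eq_span, hclosure]
  rfl

end ControlSpan

def sqfreeExp (s : Finset ℕ) : ℕ → ℕ := fun i => if i ∈ s then 1 else 0

lemma sqfreeExp_le_iff {s : Finset ℕ} {u : ℕ → ℕ} : sqfreeExp s ≤ u ↔ ∀ i ∈ s, 1 ≤ u i := by
  refine ⟨fun h i hi => by simpa [sqfreeExp, hi] using h i, fun h i => ?_⟩
  unfold sqfreeExp
  split_ifs with hi
  exacts [h i hi, Nat.zero_le _]

lemma decide_one_le_or_eq_of_add_eq {a b c d : ℕ} (h : a + b = c + d) :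
    (decide (1 ≤ a) || decide (1 ≤ b)) = (decide (1 ≤ c) || decide (1 ≤ d)) := by
  simp only [← Bool.decide_or, decide_eq_decide]
  omega

abbrev thetaEq (u v : ℕ → ℕ) : Prop :=
  u 1 + u 2 = v 3 + v 4 ∧ u 2 + u 3 = v 2 + v 3 ∧
    u 3 + u 4 = v 1 + v 2 ∧ u 4 + u 5 = v 6 + v 7 ∧
    u 5 + u 6 = v 5 + v 6 ∧ u 6 + u 7 = v 4 + v 5

lemma thetaEq_add {u v u' v' : ℕ → ℕ} (h : thetaEq u v) (h' : thetaEq u' v') :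
    thetaEq (u + u') (v + v') := by
  simp only [thetaEq, Pi.add_apply] at *
  omega

lemma thetaEq_tsub {u v a b : ℕ → ℕ} (h : thetaEq u v) (h' : thetaEq a b) (hau : a ≤ u)
    (hbv : b ≤ v) : thetaEq (u - a) (v - b) := by
  obtain ⟨w, rfl⟩ := exists_add_of_le hau
  obtain ⟨z, rfl⟩ := exists_add_of_le hbv
  simp only [add_tsub_cancel_left]
  simp only [thetaEq, Pi.add_apply] at *
  omega

/-- The exponent vectors of `X₁, X₂, X₃, X₄, Y₁, Y₂, Z₁, Z₂, W₁, W₂, W₃`. -/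
def thetaGenExps : Set ((ℕ → ℕ) × (ℕ → ℕ)) :=
  {(sqfreeExp {2}, sqfreeExp {3}), (sqfreeExp {3}, sqfreeExp {2}),
    (sqfreeExp {5}, sqfreeExp {6}), (sqfreeExp {6}, sqfreeExp {5}),
    (sqfreeExp {1, 7}, sqfreeExp {4}), (sqfreeExp {4}, sqfreeExp {1, 7}),
    (sqfreeExp {1, 3}, sqfreeExp {1, 3}), (sqfreeExp {5, 7}, sqfreeExp {5, 7}),
    (sqfreeExp {1, 4, 6}, sqfreeExp {1, 4, 6}),
    (sqfreeExp {2, 4, 6}, sqfreeExp {2, 4, 6}),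
    (sqfreeExp {2, 4, 7}, sqfreeExp {2, 4, 7})}

lemma thetaEq_of_mem_thetaGenExps :
    ∀ g ∈ thetaGenExps, thetaEq g.1 g.2 ∧ expDeg 7 g.1 g.2 ≠ 0 := by
  simp [thetaGenExps, expDeg, Fin.sum_univ_seven, sqfreeExp, thetaEq]

lemma image_monAB_thetaGenExps (K : Type*) [Field K] :
    (fun g => monAB K 7 g.1 g.2) '' thetaGenExps =
      ({Av K 7 1 * Bv K 7 2, Av K 7 2 * Bv K 7 1,
        Av K 7 4 * Bv K 7 5, Av K 7 5 * Bv K 7 4,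
        Av K 7 0 * Av K 7 6 * Bv K 7 3, Av K 7 3 * Bv K 7 0 * Bv K 7 6,
        Av K 7 0 * Av K 7 2 * Bv K 7 0 * Bv K 7 2,
        Av K 7 4 * Av K 7 6 * Bv K 7 4 * Bv K 7 6,
        Av K 7 0 * Av K 7 3 * Av K 7 5 * Bv K 7 0 * Bv K 7 3 * Bv K 7 5,
        Av K 7 1 * Av K 7 3 * Av K 7 5 * Bv K 7 1 * Bv K 7 3 * Bv K 7 5,
        Av K 7 1 * Av K 7 3 * Av K 7 6 * Bv K 7 1 * Bv K 7 3 * Bv K 7 6} :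
        Set (MvPolynomial (Fin 7 ⊕ Fin 7) K)) := by
  simp only [thetaGenExps, Set.image_insert_eq, Set.image_singleton, monAB, Fin.prod_univ_seven,
    sqfreeExp, Av, Bv]
  simp [Finset.mem_insert, mul_assoc]

-- `pᵢ`, `qᵢ` stand for `uᵢ > 0`, `vᵢ > 0`: every solution of the control equations has
-- the support pattern of one of the eleven generators.
lemma thetaSupports_cover : ∀ p₁ p₂ p₃ p₄ p₅ p₆ p₇ q₁ q₂ q₃ q₄ q₅ q₆ q₇ : Bool,
    (p₁ || p₂) = (q₃ || q₄) → (p₂ || p₃) = (q₂ || q₃) → (p₃ || p₄) = (q₁ || q₂) →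
    (p₄ || p₅) = (q₆ || q₇) → (p₅ || p₆) = (q₅ || q₆) → (p₆ || p₇) = (q₄ || q₅) →
    (p₁ || p₂ || p₃ || p₄ || p₅ || p₆ || p₇ || q₁ || q₂ || q₃ || q₄ || q₅ || q₆ || q₇) →
    (p₂ && q₃ || p₃ && q₂ || p₅ && q₆ || p₆ && q₅ || p₁ && p₇ && q₄ || p₄ && q₁ && q₇ ||
      p₁ && p₃ && q₁ && q₃ || p₅ && p₇ && q₅ && q₇ || p₁ && p₄ && p₆ && q₁ && q₄ && q₆ ||
      p₂ && p₄ && p₆ && q₂ && q₄ && q₆ || p₂ && p₄ && p₇ && q₂ && q₄ && q₇) := by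
  decide

lemma exists_mem_thetaGenExps_le {u v : ℕ → ℕ} (h : thetaEq u v) (hd : expDeg 7 u v ≠ 0) :
    ∃ g ∈ thetaGenExps, g.1 ≤ u ∧ g.2 ≤ v := by
  obtain ⟨e₁, e₂, e₃, e₄, e₅, e₆⟩ := h
  have hcover := thetaSupports_cover (1 ≤ u 1) (1 ≤ u 2) (1 ≤ u 3) (1 ≤ u 4) (1 ≤ u 5) (1 ≤ u 6)
    (1 ≤ u 7) (1 ≤ v 1) (1 ≤ v 2) (1 ≤ v 3) (1 ≤ v 4) (1 ≤ v 5) (1 ≤ v 6) (1 ≤ v 7)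
    (decide_one_le_or_eq_of_add_eq e₁) (decide_one_le_or_eq_of_add_eq e₂)
    (decide_one_le_or_eq_of_add_eq e₃) (decide_one_le_or_eq_of_add_eq e₄)
    (decide_one_le_or_eq_of_add_eq e₅) (decide_one_le_or_eq_of_add_eq e₆)
    (by
      simp [expDeg, Fin.sum_univ_seven] at hd
      simp only [← Bool.decide_or, decide_eq_true_eq]
      omega)
  simp only [Bool.or_eq_true, Bool.and_eq_true, decide_eq_true_eq] at hcover
  simp only [thetaGenExps, Set.mem_insert_iff, Set.mem_singleton_iff, exists_eq_or_imp,
    exists_eq_left, sqfreeExp_le_iff, Finset.mem_insert, Finset.mem_singleton, forall_eq_or_imp,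
    forall_eq]
  simpa only [and_assoc, or_assoc] using hcover

/-- For `n = 7` and the matching `Θ(x_1)=y_3, Θ(x_2)=y_2, Θ(x_3)=y_1, Θ(x_4)=y_6,
Θ(x_5)=y_5, Θ(x_6)=y_4`: the eleven monomials
`X_1 = A_2B_3, X_2 = A_3B_2, X_3 = A_5B_6, X_4 = A_6B_5, Y_1 = A_1A_7B_4,
Y_2 = A_4B_1B_7, Z_1 = A_1A_3B_1B_3, Z_2 = A_5A_7B_5B_7, W_1 = A_1A_4A_6B_1B_4B_6,
W_2 = A_2A_4A_6B_2B_4B_6, W_3 = A_2A_4A_7B_2B_4B_7`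
all lie in `S(Θ)` and generate it as a `K`-algebra. -/
theorem stmt18 (K : Type*) [Field K] :
    (∀ p ∈ ({Av K 7 1 * Bv K 7 2, Av K 7 2 * Bv K 7 1,
        Av K 7 4 * Bv K 7 5, Av K 7 5 * Bv K 7 4,
        Av K 7 0 * Av K 7 6 * Bv K 7 3, Av K 7 3 * Bv K 7 0 * Bv K 7 6,
        Av K 7 0 * Av K 7 2 * Bv K 7 0 * Bv K 7 2,
        Av K 7 4 * Av K 7 6 * Bv K 7 4 * Bv K 7 6,
        Av K 7 0 * Av K 7 3 * Av K 7 5 * Bv K 7 0 * Bv K 7 3 * Bv K 7 5,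
        Av K 7 1 * Av K 7 3 * Av K 7 5 * Bv K 7 1 * Bv K 7 3 * Bv K 7 5,
        Av K 7 1 * Av K 7 3 * Av K 7 6 * Bv K 7 1 * Bv K 7 3 * Bv K 7 6} :
        Set (MvPolynomial (Fin 7 ⊕ Fin 7) K)),
      p ∈ controlSpan K 7
        (fun u v => u 1 + u 2 = v 3 + v 4 ∧ u 2 + u 3 = v 2 + v 3 ∧
          u 3 + u 4 = v 1 + v 2 ∧ u 4 + u 5 = v 6 + v 7 ∧
          u 5 + u 6 = v 5 + v 6 ∧ u 6 + u 7 = v 4 + v 5)) ∧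
    ((Algebra.adjoin K
        ({Av K 7 1 * Bv K 7 2, Av K 7 2 * Bv K 7 1,
          Av K 7 4 * Bv K 7 5, Av K 7 5 * Bv K 7 4,
          Av K 7 0 * Av K 7 6 * Bv K 7 3, Av K 7 3 * Bv K 7 0 * Bv K 7 6,
          Av K 7 0 * Av K 7 2 * Bv K 7 0 * Bv K 7 2,
          Av K 7 4 * Av K 7 6 * Bv K 7 4 * Bv K 7 6,
          Av K 7 0 * Av K 7 3 * Av K 7 5 * Bv K 7 0 * Bv K 7 3 * Bv K 7 5,
          Av K 7 1 * Av K 7 3 * Av K 7 5 * Bv K 7 1 * Bv K 7 3 * Bv K 7 5,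
          Av K 7 1 * Av K 7 3 * Av K 7 6 * Bv K 7 1 * Bv K 7 3 * Bv K 7 6} :
          Set (MvPolynomial (Fin 7 ⊕ Fin 7) K)) :
        Subalgebra K (MvPolynomial (Fin 7 ⊕ Fin 7) K)) : Set (MvPolynomial (Fin 7 ⊕ Fin 7) K)) =
      ↑(controlSpan K 7
        (fun u v => u 1 + u 2 = v 3 + v 4 ∧ u 2 + u 3 = v 2 + v 3 ∧
          u 3 + u 4 = v 1 + v 2 ∧ u 4 + u 5 = v 6 + v 7 ∧
          u 5 + u 6 = v 5 + v 6 ∧ u 6 + u 7 = v 4 + v 5)) := by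
  rw [← image_monAB_thetaGenExps]
  refine ⟨?_, coe_adjoin_eq_controlSpan (by simp) thetaEq_add thetaEq_tsub
    thetaEq_of_mem_thetaGenExps fun _ _ => exists_mem_thetaGenExps_le⟩
  rintro _ ⟨g, hg, rfl⟩
  exact monAB_mem_controlSpan (thetaEq_of_mem_thetaGenExps g hg).1
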